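/- arXiv:1502.02623 — 2 statements merged into one kernel-verified Lean document; each statement's English description precedes it below -/
import Mathlib

section
/- Let Π = (P, 𝓛) be a finite projective plane of order n with n prime, and suppose Π is magic over some abelian group G, i.e., there exists an injective line-invariant function v : P → G. Then (ℤ/nℤ)³ is (isomorphic to) a subgroup of G; i.e., there exists an injective group homomorphism (ℤ/nℤ)³ → G. -/
open Configuration

/-- The sum of `v` over the points of the line `l`. -/
noncomputable def lineSum {P L G : Type*} [Membership P L] [AddCommMonoid G]
    (v : P → G) (l : L) : G :=
  ∑ᶠ x ∈ {x : P | x ∈ l}, v x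

/-- `v : P → G` is line invariant if its sum along every line of `L` is the same. -/
def LineInvariant (P L : Type*) {G : Type*} [Membership P L] [AddCommMonoid G]
    (v : P → G) : Prop :=
  ∀ l l' : L, lineSum v l = lineSum v l'

/-!
Let `v` be line invariant with common line sum `s`. Summing over the `n + 1` lines through a
point `x` counts `x` itself `n + 1` times and every other point once, so
`(n + 1) • s = n • v x + ∑ y, v y`. Hence `n • v x` does not depend on `x`, and the
`n² + n + 1` differences `v x - v x₀` are distinct elements of the `n`-torsion subgroup `G[n]`,
a vector space over `ZMod n`. Their span has more than `n²` elements, so its dimension is at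
least `3`.
-/

open Finset

theorem Module.exists_injective_linearMap_of_pow_card_lt {K V S : Type*} [Field K] [Finite K]
    [AddCommGroup V] [Module K V] [Finite S] {w : S → V} (hw : Function.Injective w) {k : ℕ}
    (hk : Nat.card K ^ k < Nat.card S) :
    ∃ f : (Fin (k + 1) → K) →ₗ[K] V, Function.Injective f := by
  let A := Submodule.span K (Set.range w)
  have : Module.Finite K A := Module.Finite.span_of_finite K (Set.finite_range w)
  have : Finite A := Module.finite_of_finite K
  have hSA : Nat.card S ≤ Nat.card A :=
    Nat.card_le_card_of_injective (fun x ↦ ⟨w x, Submodule.subset_span ⟨x, rfl⟩⟩)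
      fun _ _ h ↦ hw (congrArg Subtype.val h)
  have hrank : k < Module.finrank K A := by
    rw [Module.natCard_eq_pow_finrank (K := K) (V := A)] at hSA
    exact (Nat.pow_lt_pow_iff_right Finite.one_lt_card).mp (hk.trans_le hSA)
  obtain ⟨b, hb⟩ := exists_linearIndependent_of_le_finrank hrank
  exact ⟨A.subtype ∘ₗ Fintype.linearCombination K b,
    Subtype.val_injective.comp hb.fintypeLinearCombination_injective⟩

open Classical in
theorem lineSum_eq_sum {P L G : Type*} [Membership P L] [Fintype P] [AddCommMonoid G]
    (v : P → G) (l : L) : lineSum v l = ∑ x with x ∈ l, v x := by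
  rw [lineSum, ← finsum_mem_coe_finset]
  simp

namespace Configuration.ProjectivePlane

variable {P L G : Type*} [Membership P L] [Fintype P] [Fintype L] [ProjectivePlane P L]

open Classical in
theorem card_lines_through (x : P) : #{l : L | x ∈ l} = order P L + 1 := by
  rw [← lineCount_eq L x, lineCount, Nat.card_eq_fintype_card, Fintype.card_subtype]

open Classical in
theorem card_lines_through_pair (x y : P) :
    #{l : L | x ∈ l ∧ y ∈ l} = if y = x then order P L + 1 else 1 := by
  split_ifs with hyx
  · simpa only [hyx, and_self] using card_lines_through x
  · obtain ⟨l, hl, huniq⟩ := HasLines.existsUnique_line P L x y (Ne.symm hyx)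
    exact card_eq_one.mpr ⟨l, by ext m; simpa using ⟨huniq m, by rintro rfl; exact hl⟩⟩

open Classical in
theorem sum_lineSum_lines_through [AddCommMonoid G] (v : P → G) (x : P) :
    ∑ l : L with x ∈ l, lineSum v l = order P L • v x + ∑ y, v y := by
  have hcount : ∀ y ∈ ({x}ᶜ : Finset P), #{l : L | x ∈ l ∧ y ∈ l} • v y = v y :=
    fun y hy ↦ by
      rw [card_lines_through_pair, if_neg (by simpa using hy), one_smul]
  calc ∑ l : L with x ∈ l, lineSum v l
      = ∑ l : L with x ∈ l, ∑ y with y ∈ l, v y := by simp only [lineSum_eq_sum]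
    _ = ∑ y, ∑ l : L with x ∈ l ∧ y ∈ l, v y := sum_comm' (by simp)
    _ = ∑ y, #{l : L | x ∈ l ∧ y ∈ l} • v y := by simp only [sum_const]
    _ = (order P L + 1) • v x + ∑ y ∈ {x}ᶜ, v y := by
      rw [Fintype.sum_eq_add_sum_compl x, card_lines_through_pair, if_pos rfl, sum_congr rfl hcount]
    _ = order P L • v x + ∑ y, v y := by
      rw [Fintype.sum_eq_add_sum_compl x, succ_nsmul, add_assoc]

theorem _root_.LineInvariant.order_nsmul_eq [AddCommGroup G] {v : P → G}
    (hv : LineInvariant P L v) (x y : P) : order P L • v x = order P L • v y := by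
  classical
  obtain ⟨l₀, -⟩ := Nondegenerate.exists_line (L := L) x
  have key (z : P) : order P L • v z + ∑ y, v y = (order P L + 1) • lineSum v l₀ := by
    rw [← sum_lineSum_lines_through, sum_congr rfl fun l _ ↦ hv l l₀, sum_const,
      card_lines_through]
  exact add_right_cancel ((key x).trans (key y).symm)

theorem _root_.LineInvariant.sub_mem_torsionBy_order [AddCommGroup G] {v : P → G}
    (hv : LineInvariant P L v) (x y : P) :
    v x - v y ∈ AddSubgroup.torsionBy G (order P L) := by
  rw [AddSubgroup.torsionBy.nsmul_iff, smul_sub, hv.order_nsmul_eq x y, sub_self]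

end Configuration.ProjectivePlane

/-- If a projective plane of prime order `n` is magic over an abelian group `G`, then
`(ℤ/nℤ)³` embeds into `G` as a subgroup. -/
theorem stmt_14 {P L G : Type*} [Membership P L] [Fintype P] [Fintype L]
    [ProjectivePlane P L] [AddCommGroup G]
    {n : ℕ} (hn : ProjectivePlane.order P L = n) (hp : n.Prime)
    (h : ∃ v : P → G, Function.Injective v ∧ LineInvariant P L v) :
    ∃ f : (Fin 3 → ZMod n) →+ G, Function.Injective f := by
  obtain ⟨v, hv, hinv⟩ := h
  have : Fact n.Prime := ⟨hp⟩
  let := AddSubgroup.torsionBy.zmodModule (A := G) (n := n)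
  have hcard : Nat.card (ZMod n) ^ 2 < Nat.card P := by
    rw [Nat.card_zmod, Nat.card_eq_fintype_card, ProjectivePlane.card_points P L, hn]
    omega
  obtain ⟨x₀⟩ : Nonempty P := Nat.card_pos_iff.mp (by omega) |>.1
  let w : P → AddSubgroup.torsionBy G n :=
    fun x ↦ ⟨v x - v x₀, hn ▸ hinv.sub_mem_torsionBy_order x x₀⟩
  have hw : Function.Injective w :=
    fun x y hxy ↦ hv (sub_left_injective (congrArg Subtype.val hxy))
  obtain ⟨f, hf⟩ := Module.exists_injective_linearMap_of_pow_card_lt hw hcard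
  exact ⟨(AddSubgroup.torsionBy G n).subtype.comp f.toAddMonoidHom,
    Subtype.val_injective.comp hf⟩
end

section
/- Let Π = (P, 𝓛) be a finite projective plane and let k ∈ ℕ. Then every line-invariant function v : P → ℤ^k is constant. -/
/-!
Summing the line sums over the `n + 1` lines through a point `p` of a projective plane of
order `n` counts `p` itself `n + 1` times and every other point exactly once. If every line sum
equals `c`, this gives `(n + 1) • c = ∑ x, v x + n • v p`, so `n • v p` does not depend on `p`;
as `n ≠ 0`, neither does `v p` in a torsion-free group.
-/

open Configuration

open Finset

section

variable {P L G : Type*} [Membership P L] [∀ (p : P) (l : L), Decidable (p ∈ l)]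

theorem lineSum_eq_sum_filter [Fintype P] [AddCommMonoid G] (v : P → G) (l : L) :
    lineSum v l = ∑ x with x ∈ l, v x := by
  rw [lineSum, ← finsum_mem_coe_finset, coe_filter]
  simp only [mem_univ, true_and]

theorem Configuration.HasLines.card_filter_mem_and_mem_of_ne [Fintype L] [HasLines P L]
    {p q : P} (h : p ≠ q) : #{l : L | p ∈ l ∧ q ∈ l} = 1 := by
  obtain ⟨l, hl, huniq⟩ := HasLines.existsUnique_line P L p q h
  exact card_eq_one.mpr ⟨l, by ext m; simpa using ⟨huniq m, fun hm => hm ▸ hl⟩⟩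

namespace Configuration.ProjectivePlane

variable [Fintype P] [Fintype L] [ProjectivePlane P L]

variable (L) in
theorem card_filter_mem_eq (p : P) : #{l : L | p ∈ l} = order P L + 1 := by
  rw [← lineCount_eq L p, lineCount, Nat.card_eq_fintype_card, Fintype.card_subtype]

theorem sum_lineSum_filter_mem [AddCommMonoid G] (v : P → G) (p : P) :
    ∑ l : L with p ∈ l, lineSum v l = ∑ x, v x + order P L • v p := by
  classical
  calc ∑ l : L with p ∈ l, lineSum v l
      = ∑ x, #{l : L | p ∈ l ∧ x ∈ l} • v x := by
        simp_rw [lineSum_eq_sum_filter, ← sum_const]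
        exact sum_comm' fun l x => by simp [and_comm]
    _ = ∑ x, (1 + if x = p then order P L else 0) • v x := by
        refine sum_congr rfl fun x _ => ?_
        split_ifs with hx
        · simp only [hx, and_self, card_filter_mem_eq, add_comm]
        · rw [HasLines.card_filter_mem_and_mem_of_ne (Ne.symm hx), add_zero]
    _ = ∑ x, v x + order P L • v p := by
        simp_rw [add_smul, one_smul, sum_add_distrib, ite_smul, zero_smul, sum_ite_eq', if_pos (mem_univ p)]

end Configuration.ProjectivePlane

namespace LineInvariant

open ProjectivePlane

variable [Fintype P] [Fintype L] [ProjectivePlane P L]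

theorem sum_add_order_nsmul [AddCommMonoid G] {v : P → G} (hv : LineInvariant P L v) (p : P)
    (l : L) : ∑ x, v x + order P L • v p = (order P L + 1) • lineSum v l := by
  rw [← sum_lineSum_filter_mem (L := L), ← card_filter_mem_eq L p, ← sum_const]
  exact sum_congr rfl fun m _ => hv m l

theorem apply_eq_apply [AddCancelCommMonoid G] [IsAddTorsionFree G] {v : P → G}
    (hv : LineInvariant P L v) (a b : P) : v a = v b := by
  obtain ⟨-, -, -, l, -⟩ := exists_config (P := P) (L := L)
  have h := (hv.sum_add_order_nsmul a l).trans (hv.sum_add_order_nsmul b l).symm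
  exact nsmul_right_injective (one_lt_order P L).ne_bot (add_left_cancel h)

end LineInvariant

end

/-- Every line-invariant function from a finite projective plane to `ℤ^k` is constant. -/
theorem stmt_18 {P L : Type*} [Membership P L] [Fintype P] [Fintype L]
    [ProjectivePlane P L] (k : ℕ) (v : P → (Fin k → ℤ)) (hv : LineInvariant P L v) :
    ∀ a b : P, v a = v b := by
  classical
  exact hv.apply_eq_apply
end
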